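/- The mixed graphs Γ₁ (path a—b→c with one undirected edge {a,b} and one directed edge from b to c) and Γ₂ (path x←y→z with both edges directed away from y) are not isomorphic as mixed graphs, even though the associated twisted right-angled Artin groups are isomorphic. -/

import Mathlib

/-- A mixed graph on a vertex type `V`: a symmetric set of undirected edges together
with a set of directed edges (`dir a b` means a directed edge from `a` to `b`),
with no edge both directed and undirected and no loops or doubled directed edges. -/
structure MixedGraph (V : Type*) where
  und : V → V → Prop
  dir : V → V → Prop

/-- An isomorphism of mixed graphs: a bijection of vertices preserving undirected
edges and preserving directed edges with their orientation. -/
def MixedGraph.Iso {V W : Type*} (Γ₁ : MixedGraph V) (Γ₂ : MixedGraph W) : Prop :=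
  ∃ e : V ≃ W, (∀ a b, Γ₁.und a b ↔ Γ₂.und (e a) (e b)) ∧
    (∀ a b, Γ₁.dir a b ↔ Γ₂.dir (e a) (e b))

/-- Γ₁ : path `a — b → c` with undirected edge `{a,b}` and directed edge `b → c`. -/
def Gamma1 : MixedGraph (Fin 3) where
  und a b := (a = 0 ∧ b = 1) ∨ (a = 1 ∧ b = 0)
  dir a b := a = 1 ∧ b = 2

/-- Γ₂ : path `x ← y → z` with directed edges `y → x` and `y → z`. -/
def Gamma2 : MixedGraph (Fin 3) where
  und _ _ := False
  dir a b := a = 1 ∧ (b = 0 ∨ b = 2)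

/-- The relations of the tRAAG of a mixed graph. -/
def traagRels {V : Type*} (Γ : MixedGraph V) : Set (FreeGroup V) :=
  {r | (∃ a b, Γ.und a b ∧
          r = FreeGroup.of a * FreeGroup.of b * (FreeGroup.of a)⁻¹ * (FreeGroup.of b)⁻¹) ∨
       (∃ a b, Γ.dir a b ∧
          r = FreeGroup.of a * FreeGroup.of b * FreeGroup.of a * (FreeGroup.of b)⁻¹)}

/-!
Γ₁ has an undirected edge and Γ₂ has none, so they are not isomorphic. In a tRAAG a directed
edge `u → v` says that conjugation by `v` inverts `u`. In the tRAAG of Γ₂ both `x` and `z` invert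
`y`, hence `z x⁻¹` commutes with `y`; so `a ↦ z x⁻¹, b ↦ y, c ↦ x` respects the relations of Γ₁.
Conversely `x ↦ c, y ↦ b, z ↦ a c` respects those of Γ₂, since `a` commutes with `b` and `c`
inverts `b`. The two homomorphisms are mutually inverse on generators.
-/

section ConjInv

variable {G : Type*} [Group G]

theorem mul_mul_mul_inv_eq_one_iff {a b : G} : a * b * a * b⁻¹ = 1 ↔ b * a * b⁻¹ = a⁻¹ := by
  rw [mul_assoc, mul_assoc, mul_eq_one_iff_inv_eq, eq_comm, ← mul_assoc]

theorem commute_mul_inv_of_conj_eq_inv {g h y : G} (hg : g * y * g⁻¹ = y⁻¹)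
    (hh : h * y * h⁻¹ = y⁻¹) : Commute (g * h⁻¹) y := by
  have hh' : h⁻¹ * y * h = y⁻¹ :=
    calc h⁻¹ * y * h = h⁻¹ * (h * y * h⁻¹)⁻¹ * h := by rw [hh, inv_inv]
      _ = y⁻¹ := by group
  rw [commute_iff_eq, ← mul_inv_eq_iff_eq_mul]
  calc g * h⁻¹ * y * (g * h⁻¹)⁻¹ = g * (h⁻¹ * y * h) * g⁻¹ := by group
    _ = (g * y * g⁻¹)⁻¹ := by rw [hh']; group
    _ = y := by rw [hg, inv_inv]

theorem conj_mul_eq_inv_of_commute {a g y : G} (ha : Commute a y) (hg : g * y * g⁻¹ = y⁻¹) :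
    a * g * y * (a * g)⁻¹ = y⁻¹ :=
  calc a * g * y * (a * g)⁻¹ = a * (g * y * g⁻¹) * a⁻¹ := by group
    _ = y⁻¹ := by rw [hg, ha.inv_right.eq, mul_inv_cancel_right]

end ConjInv

namespace MixedGraph

theorem not_iso_of_und_of_forall_not_und {V W : Type*} {Γ₁ : MixedGraph V} {Γ₂ : MixedGraph W}
    {a b : V} (hab : Γ₁.und a b) (h₂ : ∀ x y, ¬ Γ₂.und x y) : ¬ Γ₁.Iso Γ₂ := by
  rintro ⟨e, hund, -⟩
  exact h₂ _ _ ((hund a b).mp hab)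

variable {V : Type*} (Γ : MixedGraph V)

open PresentedGroup

theorem traag_commute_of_und {a b : V} (h : Γ.und a b) :
    Commute (of a : PresentedGroup (traagRels Γ)) (of b) := by
  have hr := one_of_mem (rels := traagRels Γ) (Or.inl ⟨a, b, h, rfl⟩)
  simp only [map_mul, map_inv] at hr
  exact commutatorElement_eq_one_iff_commute.mp hr

theorem traag_conj_eq_inv_of_dir {a b : V} (h : Γ.dir a b) :
    (of b : PresentedGroup (traagRels Γ)) * of a * (of b)⁻¹ = (of a)⁻¹ := by
  have hr := one_of_mem (rels := traagRels Γ) (Or.inr ⟨a, b, h, rfl⟩)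
  simp only [map_mul, map_inv] at hr
  exact mul_mul_mul_inv_eq_one_iff.mp hr

variable {G : Type*} [Group G] (f : V → G)

def traagLift (hund : ∀ a b, Γ.und a b → Commute (f a) (f b))
    (hdir : ∀ a b, Γ.dir a b → f b * f a * (f b)⁻¹ = (f a)⁻¹) :
    PresentedGroup (traagRels Γ) →* G :=
  toGroup (f := f) <| by
    rintro r (⟨a, b, h, rfl⟩ | ⟨a, b, h, rfl⟩)
    · have hr := commutatorElement_eq_one_iff_commute.mpr (hund a b h)
      simpa only [map_mul, map_inv, FreeGroup.lift_apply_of, commutatorElement_def] using hr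
    · simpa only [map_mul, map_inv, FreeGroup.lift_apply_of, mul_mul_mul_inv_eq_one_iff]
        using hdir a b h

@[simp]
theorem traagLift_of {hund} {hdir} (a : V) : traagLift Γ f hund hdir (of a) = f a :=
  toGroup.of _

end MixedGraph

open MixedGraph PresentedGroup

def gamma1ToGamma2 : PresentedGroup (traagRels Gamma1) →* PresentedGroup (traagRels Gamma2) :=
  traagLift Gamma1 ![of 2 * (of 0)⁻¹, of 1, of 0]
    (by
      have h := commute_mul_inv_of_conj_eq_inv
        (traag_conj_eq_inv_of_dir Gamma2 (a := 1) (b := 2) ⟨rfl, Or.inr rfl⟩)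
        (traag_conj_eq_inv_of_dir Gamma2 (a := 1) (b := 0) ⟨rfl, Or.inl rfl⟩)
      rintro a b (⟨rfl, rfl⟩ | ⟨rfl, rfl⟩)
      exacts [h, h.symm])
    (by
      rintro a b ⟨rfl, rfl⟩
      exact traag_conj_eq_inv_of_dir Gamma2 (a := 1) (b := 0) ⟨rfl, Or.inl rfl⟩)

def gamma2ToGamma1 : PresentedGroup (traagRels Gamma2) →* PresentedGroup (traagRels Gamma1) :=
  traagLift Gamma2 ![of 2, of 1, of 0 * of 2]
    (fun _ _ h => h.elim)
    (by
      have hbc := traag_conj_eq_inv_of_dir Gamma1 (a := 1) (b := 2) ⟨rfl, rfl⟩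
      rintro a b ⟨rfl, rfl | rfl⟩
      · exact hbc
      · exact conj_mul_eq_inv_of_commute
          (traag_commute_of_und Gamma1 (a := 0) (b := 1) (Or.inl ⟨rfl, rfl⟩)) hbc)

theorem gamma1_not_iso_gamma2_but_groups_iso :
    ¬ MixedGraph.Iso Gamma1 Gamma2 ∧
      Nonempty (PresentedGroup (traagRels Gamma1) ≃* PresentedGroup (traagRels Gamma2)) := by
  refine ⟨?_, ⟨gamma1ToGamma2.toMulEquiv gamma2ToGamma1 ?_ ?_⟩⟩
  · exact not_iso_of_und_of_forall_not_und (a := 0) (b := 1) (Or.inl ⟨rfl, rfl⟩) fun _ _ h => h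
  all_goals
    refine PresentedGroup.ext fun i => ?_
    fin_cases i <;> simp [gamma1ToGamma2, gamma2ToGamma1]
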